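/- Let Ω be a connected weighted simplicial complex on [n] and let a finite group G act on Ω with the action on ℱ̃ free. Then for every G-invariant p ∈ 𝒫 one has rank_{(Ω,G)}(p) ≤ |G| · rank_Ω(p) ≤ |G| · rank_{Σ_n}(p), where rank_{Σ_n}(p) is the tensor rank of p, i.e. the minimal r ∈ ℕ such that p = Σ_{α=1}^r p_α^[0](x^[0]) ⋯ p_α^[n](x^[n]) for some p_α^[i] ∈ ℝ[x^[i]]. -/

import Mathlib

namespace PolyDec

open MvPolynomial

attribute [local instance] Classical.propDecidable

noncomputable section

/-! ### Weighted simplicial complexes -/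

/-- `Ω` is a weighted simplicial complex on `[n] = {0,…,n}`. -/
def IsWSC {n : ℕ} (Ω : Finset (Fin (n + 1)) → ℕ) : Prop :=
  (∀ S T : Finset (Fin (n + 1)), S ⊆ T → Ω S ∣ Ω T) ∧ ∀ i : Fin (n + 1), Ω {i} ≠ 0

/-- `F` is a facet of `Ω`: a maximal simplex. -/
def IsFacet {n : ℕ} (Ω : Finset (Fin (n + 1)) → ℕ) (F : Finset (Fin (n + 1))) : Prop :=
  Ω F ≠ 0 ∧ ∀ S : Finset (Fin (n + 1)), Ω S ≠ 0 → F ⊆ S → S = F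

/-- `Ω` is connected: any two vertices are joined by a chain of vertices such that
consecutive ones share a facet. -/
def Conn {n : ℕ} (Ω : Finset (Fin (n + 1)) → ℕ) : Prop :=
  ∀ i j : Fin (n + 1),
    Relation.ReflTransGen
      (fun a b => ∃ F : Finset (Fin (n + 1)), IsFacet Ω F ∧ a ∈ F ∧ b ∈ F) i j

/-- The multiset of facets `ℱ̃`: each facet `F` appears with multiplicity `Ω F`. -/
abbrev MultiFacet {n : ℕ} (Ω : Finset (Fin (n + 1)) → ℕ) : Type :=
  Σ F : {F : Finset (Fin (n + 1)) // IsFacet Ω F}, Fin (Ω F.1)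

/-- The sub-multiset `ℱ̃ᵢ` of multifacets containing the vertex `i`. -/
abbrev MFi {n : ℕ} (Ω : Finset (Fin (n + 1)) → ℕ) (i : Fin (n + 1)) : Type :=
  {F : MultiFacet Ω // i ∈ F.1.1}

/-- Restriction `α|ᵢ` of `α : ℱ̃ → I` to `ℱ̃ᵢ`. -/
def restr {n : ℕ} {Ω : Finset (Fin (n + 1)) → ℕ} {I : Type} (α : MultiFacet Ω → I)
    (i : Fin (n + 1)) : MFi Ω i → I :=
  fun F => α F.1

/-! ### Group actions on a weighted simplicial complex -/

/-- An action of a group `G` on the weighted simplicial complex `Ω`: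
an action on the vertices leaving `Ω` invariant, together with a refinement to an action on
the multiset of facets which is compatible with the collapse map. -/
structure GAct {n : ℕ} (Ω : Finset (Fin (n + 1)) → ℕ) (G : Type) [Group G] where
  act : G →* Equiv.Perm (Fin (n + 1))
  omega_inv : ∀ (g : G) (S : Finset (Fin (n + 1))), Ω (S.image (act g)) = Ω S
  actF : G →* Equiv.Perm (MultiFacet Ω)
  collapse : ∀ (g : G) (F : MultiFacet Ω), (actF g F).1.1 = F.1.1.image (act g)

variable {n : ℕ} {Ω : Finset (Fin (n + 1)) → ℕ} {G : Type} [Group G]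

/-- The action is free on `ℱ̃`. -/
def GAct.Free (A : GAct Ω G) : Prop :=
  ∀ (g : G) (F : MultiFacet Ω), A.actF g F = F → g = 1

/-- The action on the vertices is blending. -/
def GAct.Blending (A : GAct Ω G) : Prop :=
  ∀ gs : Fin (n + 1) → G,
    (Function.Surjective fun i => A.act (gs i) i) →
      ∃ g : G, ∀ i, A.act g i = A.act (gs i) i

theorem GAct.mem_shift (A : GAct Ω G) (g : G) (i : Fin (n + 1)) (F : MFi Ω (A.act g i)) :
    i ∈ (A.actF g⁻¹ F.1).1.1 := by
  rw [A.collapse]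
  refine Finset.mem_image.2 ⟨A.act g i, F.2, ?_⟩
  rw [map_inv]
  exact Equiv.symm_apply_apply _ _

/-- For `β : ℱ̃ᵢ → I`, the shifted function `ᵍβ : ℱ̃_{g·i} → I`, `(ᵍβ)(F) = β (g⁻¹·F)`. -/
def GAct.shift (A : GAct Ω G) (g : G) (i : Fin (n + 1)) {I : Type} (β : MFi Ω i → I) :
    MFi Ω (A.act g i) → I :=
  fun F => β ⟨A.actF g⁻¹ F.1, A.mem_shift g i F⟩

/-! ### Polynomial spaces -/

/-- The space `𝒫 = ℝ[x⁽⁰⁾,…,x⁽ⁿ⁾]`, where block `i` has `m i` variables. -/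
abbrev PSpace {n : ℕ} (m : Fin (n + 1) → ℕ) : Type :=
  MvPolynomial (Σ i : Fin (n + 1), Fin (m i)) ℝ

/-- The local space `ℝ[x⁽ⁱ⁾]`. -/
abbrev LSpace {n : ℕ} (m : Fin (n + 1) → ℕ) (i : Fin (n + 1)) : Type :=
  MvPolynomial (Fin (m i)) ℝ

/-- The inclusion `ℝ[x⁽ⁱ⁾] → 𝒫`. -/
def emb {n : ℕ} (m : Fin (n + 1) → ℕ) (i : Fin (n + 1)) : LSpace m i →ₐ[ℝ] PSpace m :=
  rename fun j => (⟨i, j⟩ : Σ i : Fin (n + 1), Fin (m i))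

variable {m : Fin (n + 1) → ℕ}

/-- The variable permutation `x⁽ⁱ⁾ ↦ x⁽ᵍ·ⁱ⁾` induced by `g`. -/
def permVar (A : GAct Ω G) (hm : ∀ (g : G) (i : Fin (n + 1)), m (A.act g i) = m i) (g : G) :
    (Σ i : Fin (n + 1), Fin (m i)) → Σ i : Fin (n + 1), Fin (m i) :=
  fun v => ⟨A.act g v.1, Fin.cast (hm g v.1).symm v.2⟩

/-- `p` is `G`-invariant: `p(x⁽ᵍ⁰⁾,…,x⁽ᵍⁿ⁾) = p(x⁽⁰⁾,…,x⁽ⁿ⁾)` for all `g ∈ G`. -/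
def GInvPoly (A : GAct Ω G) (hm : ∀ (g : G) (i : Fin (n + 1)), m (A.act g i) = m i)
    (p : PSpace m) : Prop :=
  ∀ g : G, rename (permVar A hm g) p = p

/-! ### Sums of squares, cones -/

/-- `p` is a sum of squares. -/
def IsSos {σ : Type} (p : MvPolynomial σ ℝ) : Prop :=
  ∃ (N : ℕ) (q : Fin N → MvPolynomial σ ℝ), p = ∑ k : Fin N, q k ^ 2

/-- `C` is a convex cone. -/
def IsConvexConeSet {V : Type} [AddCommMonoid V] [Module ℝ V] (C : Set V) : Prop :=
  ∀ p ∈ C, ∀ q ∈ C, ∀ a b : ℝ, 0 ≤ a → 0 ≤ b → a • p + b • q ∈ C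

/-- The local cones agree along orbits, `C⁽ᵍ·ⁱ⁾ = C⁽ⁱ⁾` (under the renaming identification). -/
def ConeCompat (A : GAct Ω G) (hm : ∀ (g : G) (i : Fin (n + 1)), m (A.act g i) = m i)
    (C : ∀ i : Fin (n + 1), Set (LSpace m i)) : Prop :=
  ∀ (g : G) (i : Fin (n + 1)) (q : LSpace m (A.act g i)),
    q ∈ C (A.act g i) ↔ rename (Fin.cast (hm g i)) q ∈ C i

/-- The separable cone `C_sep = C⁽⁰⁾ ⊗ ⋯ ⊗ C⁽ⁿ⁾`. -/
def SepCone {n : ℕ} (m : Fin (n + 1) → ℕ) (C : ∀ i : Fin (n + 1), Set (LSpace m i)) :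
    Set (PSpace m) :=
  {p | ∃ (r : ℕ) (q : Fin r → ∀ i : Fin (n + 1), LSpace m i),
    (∀ j i, q j i ∈ C i) ∧ p = ∑ j : Fin r, ∏ i : Fin (n + 1), emb m i (q j i)}

/-! ### Decompositions and ranks -/

/-- `p` has an `Ω`-decomposition with index set of size `r`. -/
def HasODec {n : ℕ} (Ω : Finset (Fin (n + 1)) → ℕ) (m : Fin (n + 1) → ℕ) (p : PSpace m)
    (r : ℕ) : Prop :=
  ∃ q : ∀ i : Fin (n + 1), (MFi Ω i → Fin r) → LSpace m i,
    p = ∑ α : MultiFacet Ω → Fin r, ∏ i : Fin (n + 1), emb m i (q i (restr α i))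

/-- The `Ω`-rank of `p` (`⊤` if there is no decomposition). -/
def ORank {n : ℕ} (Ω : Finset (Fin (n + 1)) → ℕ) (m : Fin (n + 1) → ℕ) (p : PSpace m) : ℕ∞ :=
  ⨅ r : {r : ℕ // HasODec Ω m p r}, (r.1 : ℕ∞)

/-- `p` has an `(Ω,G)`-decomposition with index set of size `r`. -/
def HasOGDec (A : GAct Ω G) (hm : ∀ (g : G) (i : Fin (n + 1)), m (A.act g i) = m i)
    (p : PSpace m) (r : ℕ) : Prop :=
  ∃ q : ∀ i : Fin (n + 1), (MFi Ω i → Fin r) → LSpace m i,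
    (p = ∑ α : MultiFacet Ω → Fin r, ∏ i : Fin (n + 1), emb m i (q i (restr α i))) ∧
    ∀ (g : G) (i : Fin (n + 1)) (β : MFi Ω i → Fin r),
      rename (Fin.cast (hm g i)) (q (A.act g i) (A.shift g i β)) = q i β

/-- The `(Ω,G)`-rank of `p`. -/
def OGRank (A : GAct Ω G) (hm : ∀ (g : G) (i : Fin (n + 1)), m (A.act g i) = m i)
    (p : PSpace m) : ℕ∞ :=
  ⨅ r : {r : ℕ // HasOGDec A hm p r}, (r.1 : ℕ∞)

/-- `p` has a decomposition on the simplex `Σₙ` (a plain tensor decomposition) of size `r`. -/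
def HasTDec {n : ℕ} (m : Fin (n + 1) → ℕ) (p : PSpace m) (r : ℕ) : Prop :=
  ∃ q : Fin r → ∀ i : Fin (n + 1), LSpace m i,
    p = ∑ j : Fin r, ∏ i : Fin (n + 1), emb m i (q j i)

/-- The tensor rank `rank_{Σₙ}(p)`. -/
def TRank {n : ℕ} (m : Fin (n + 1) → ℕ) (p : PSpace m) : ℕ∞ :=
  ⨅ r : {r : ℕ // HasTDec m p r}, (r.1 : ℕ∞)

/-- Separable `Ω`-decomposition w.r.t. the local cones `C`. -/
def HasSepODec {n : ℕ} (Ω : Finset (Fin (n + 1)) → ℕ) (m : Fin (n + 1) → ℕ)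
    (C : ∀ i : Fin (n + 1), Set (LSpace m i)) (p : PSpace m) (r : ℕ) : Prop :=
  ∃ q : ∀ i : Fin (n + 1), (MFi Ω i → Fin r) → LSpace m i,
    (p = ∑ α : MultiFacet Ω → Fin r, ∏ i : Fin (n + 1), emb m i (q i (restr α i))) ∧
    ∀ i β, q i β ∈ C i

/-- The separable `Ω`-rank. -/
def SepORank {n : ℕ} (Ω : Finset (Fin (n + 1)) → ℕ) (m : Fin (n + 1) → ℕ)
    (C : ∀ i : Fin (n + 1), Set (LSpace m i)) (p : PSpace m) : ℕ∞ :=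
  ⨅ r : {r : ℕ // HasSepODec Ω m C p r}, (r.1 : ℕ∞)

/-- Separable `(Ω,G)`-decomposition w.r.t. the local cones `C`. -/
def HasSepOGDec (A : GAct Ω G) (hm : ∀ (g : G) (i : Fin (n + 1)), m (A.act g i) = m i)
    (C : ∀ i : Fin (n + 1), Set (LSpace m i)) (p : PSpace m) (r : ℕ) : Prop :=
  ∃ q : ∀ i : Fin (n + 1), (MFi Ω i → Fin r) → LSpace m i,
    (p = ∑ α : MultiFacet Ω → Fin r, ∏ i : Fin (n + 1), emb m i (q i (restr α i))) ∧
    (∀ (g : G) (i : Fin (n + 1)) (β : MFi Ω i → Fin r),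
      rename (Fin.cast (hm g i)) (q (A.act g i) (A.shift g i β)) = q i β) ∧
    ∀ i β, q i β ∈ C i

/-- The separable `(Ω,G)`-rank. -/
def SepOGRank (A : GAct Ω G) (hm : ∀ (g : G) (i : Fin (n + 1)), m (A.act g i) = m i)
    (C : ∀ i : Fin (n + 1), Set (LSpace m i)) (p : PSpace m) : ℕ∞ :=
  ⨅ r : {r : ℕ // HasSepOGDec A hm C p r}, (r.1 : ℕ∞)

/-- Separable decomposition on the simplex `Σₙ`. -/
def HasSepTDec {n : ℕ} (m : Fin (n + 1) → ℕ) (C : ∀ i : Fin (n + 1), Set (LSpace m i))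
    (p : PSpace m) (r : ℕ) : Prop :=
  ∃ q : Fin r → ∀ i : Fin (n + 1), LSpace m i,
    (∀ j i, q j i ∈ C i) ∧ p = ∑ j : Fin r, ∏ i : Fin (n + 1), emb m i (q j i)

/-- The separable rank on the simplex. -/
def SepTRank {n : ℕ} (m : Fin (n + 1) → ℕ) (C : ∀ i : Fin (n + 1), Set (LSpace m i))
    (p : PSpace m) : ℕ∞ :=
  ⨅ r : {r : ℕ // HasSepTDec m C p r}, (r.1 : ℕ∞)

/-- `p` has a sum-of-squares `(Ω,G)`-decomposition of size `r`: a `G`-invariant family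
`𝔮 = (q_k)` with `p = ∑ q_k²` together with an `(Ω,G)`-decomposition of the family. -/
def HasSosOGDec (A : GAct Ω G) (hm : ∀ (g : G) (i : Fin (n + 1)), m (A.act g i) = m i)
    (p : PSpace m) (r : ℕ) : Prop :=
  ∃ (s : Fin (n + 1) → ℕ) (hs : ∀ (g : G) (i : Fin (n + 1)), s (A.act g i) = s i)
    (q : ∀ i : Fin (n + 1), Fin (s i) → (MFi Ω i → Fin r) → LSpace m i),
    (p = ∑ k : ∀ i : Fin (n + 1), Fin (s i),
        (∑ α : MultiFacet Ω → Fin r, ∏ i : Fin (n + 1), emb m i (q i (k i) (restr α i))) ^ 2) ∧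
    ∀ (g : G) (i : Fin (n + 1)) (kk : Fin (s i)) (β : MFi Ω i → Fin r),
      rename (Fin.cast (hm g i))
        (q (A.act g i) (Fin.cast (hs g i).symm kk) (A.shift g i β)) = q i kk β

/-- The sos `(Ω,G)`-rank. -/
def SosOGRank (A : GAct Ω G) (hm : ∀ (g : G) (i : Fin (n + 1)), m (A.act g i) = m i)
    (p : PSpace m) : ℕ∞ :=
  ⨅ r : {r : ℕ // HasSosOGDec A hm p r}, (r.1 : ℕ∞)

/-! ### Local degree -/

/-- Every monomial of `p` has degree at most `d` in each block of variables. -/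
def locDegLE {n : ℕ} (m : Fin (n + 1) → ℕ) (p : PSpace m) (d : ℕ) : Prop :=
  ∀ s ∈ p.support, ∀ i : Fin (n + 1), (∑ j : Fin (m i), s ⟨i, j⟩) ≤ d

/-- The local degree of `p`. -/
def locDeg {n : ℕ} (m : Fin (n + 1) → ℕ) (p : PSpace m) : ℕ :=
  sInf {d : ℕ | locDegLE m p d}

/-! ### Tensor decompositions -/

/-- `(Ω,G)`-decomposition of a tensor `T ∈ ℝ^mv ⊗ ⋯ ⊗ ℝ^mv`. -/
def HasTOGDec (A : GAct Ω G) (mv : ℕ) (T : (Fin (n + 1) → Fin mv) → ℝ) (r : ℕ) : Prop :=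
  ∃ v : ∀ i : Fin (n + 1), (MFi Ω i → Fin r) → Fin mv → ℝ,
    (∀ jf : Fin (n + 1) → Fin mv,
      T jf = ∑ α : MultiFacet Ω → Fin r, ∏ i : Fin (n + 1), v i (restr α i) (jf i)) ∧
    ∀ (g : G) (i : Fin (n + 1)) (β : MFi Ω i → Fin r), v (A.act g i) (A.shift g i β) = v i β

/-- The `(Ω,G)`-rank of a tensor. -/
def TOGRank (A : GAct Ω G) (mv : ℕ) (T : (Fin (n + 1) → Fin mv) → ℝ) : ℕ∞ :=
  ⨅ r : {r : ℕ // HasTOGDec A mv T r}, (r.1 : ℕ∞)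

/-- Nonnegative `(Ω,G)`-decomposition of a tensor. -/
def HasNNTOGDec (A : GAct Ω G) (mv : ℕ) (T : (Fin (n + 1) → Fin mv) → ℝ) (r : ℕ) : Prop :=
  ∃ v : ∀ i : Fin (n + 1), (MFi Ω i → Fin r) → Fin mv → ℝ,
    (∀ jf : Fin (n + 1) → Fin mv,
      T jf = ∑ α : MultiFacet Ω → Fin r, ∏ i : Fin (n + 1), v i (restr α i) (jf i)) ∧
    (∀ (g : G) (i : Fin (n + 1)) (β : MFi Ω i → Fin r), v (A.act g i) (A.shift g i β) = v i β) ∧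
    ∀ i β j, 0 ≤ v i β j

/-- The nonnegative `(Ω,G)`-rank of a tensor. -/
def NNTOGRank (A : GAct Ω G) (mv : ℕ) (T : (Fin (n + 1) → Fin mv) → ℝ) : ℕ∞ :=
  ⨅ r : {r : ℕ // HasNNTOGDec A mv T r}, (r.1 : ℕ∞)

/-- Positive semidefinite `(Ω,G)`-decomposition of a tensor. -/
def HasPsdTOGDec (A : GAct Ω G) (mv : ℕ) (T : (Fin (n + 1) → Fin mv) → ℝ) (r : ℕ) : Prop :=
  ∃ E : ∀ i : Fin (n + 1), Fin mv → Matrix (MFi Ω i → Fin r) (MFi Ω i → Fin r) ℝ,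
    (∀ i j, (E i j).PosSemidef) ∧
    (∀ (g : G) (i : Fin (n + 1)) (j : Fin mv) (β β' : MFi Ω i → Fin r),
      E (A.act g i) j (A.shift g i β) (A.shift g i β') = E i j β β') ∧
    ∀ jf : Fin (n + 1) → Fin mv,
      T jf = ∑ α : MultiFacet Ω → Fin r, ∑ α' : MultiFacet Ω → Fin r,
        ∏ i : Fin (n + 1), E i (jf i) (restr α i) (restr α' i)

/-- The positive semidefinite `(Ω,G)`-rank of a tensor. -/
def PsdTOGRank (A : GAct Ω G) (mv : ℕ) (T : (Fin (n + 1) → Fin mv) → ℝ) : ℕ∞ :=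
  ⨅ r : {r : ℕ // HasPsdTOGDec A mv T r}, (r.1 : ℕ∞)

/-- The polynomial `p_T = ∑ T_{j₀…jₙ} (x⁽⁰⁾_{j₀})² ⋯ (x⁽ⁿ⁾_{jₙ})²` associated to a tensor. -/
def pT {n : ℕ} (mv : ℕ) (T : (Fin (n + 1) → Fin mv) → ℝ) :
    PSpace (fun _ : Fin (n + 1) => mv) :=
  ∑ jf : Fin (n + 1) → Fin mv, MvPolynomial.C (T jf) *
    ∏ i : Fin (n + 1), X (⟨i, jf i⟩ : Σ _ : Fin (n + 1), Fin mv) ^ 2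

/-! ### The Gram map -/

/-- Exponent vectors of monomials of degree at most `d` in `mv` variables. -/
abbrev Mon (mv d : ℕ) : Type := {k : Fin mv → Fin (d + 1) // (∑ j : Fin mv, (k j).val) ≤ d}

/-- The monomial at site `i` with exponent vector `k`. -/
def monAt {n : ℕ} {mv d : ℕ} (i : Fin (n + 1)) (k : Mon mv d) :
    PSpace (fun _ : Fin (n + 1) => mv) :=
  ∏ j : Fin mv, X (⟨i, j⟩ : Σ _ : Fin (n + 1), Fin mv) ^ (k.1 j).val

/-- The Gram map `𝒢(M) = 𝔪ᵗ M 𝔪`. -/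
def gram {n : ℕ} {mv d : ℕ}
    (M : Matrix (Fin (n + 1) → Mon mv d) (Fin (n + 1) → Mon mv d) ℝ) :
    PSpace (fun _ : Fin (n + 1) => mv) :=
  ∑ k : Fin (n + 1) → Mon mv d, ∑ k' : Fin (n + 1) → Mon mv d,
    M k k' • ∏ i : Fin (n + 1), (monAt i (k i) * monAt i (k' i))

/-! ### Homogeneous Gram map, norms -/

/-- Exponent vectors of monomials of degree exactly `d` in `mv + 1` variables. -/
abbrev MonH (mv d : ℕ) : Type :=
  {k : Fin (mv + 1) → Fin (d + 1) // (∑ j : Fin (mv + 1), (k j).val) = d}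

/-- The homogeneous monomial at site `i` with exponent vector `k`. -/
def monHAt {n : ℕ} {mv d : ℕ} (i : Fin (n + 1)) (k : MonH mv d) :
    PSpace (fun _ : Fin (n + 1) => mv + 1) :=
  ∏ j : Fin (mv + 1), X (⟨i, j⟩ : Σ _ : Fin (n + 1), Fin (mv + 1)) ^ (k.1 j).val

/-- The Gram map in the homogeneous setting. -/
def gramH {n : ℕ} {mv d : ℕ}
    (M : Matrix (Fin (n + 1) → MonH mv d) (Fin (n + 1) → MonH mv d) ℝ) :
    PSpace (fun _ : Fin (n + 1) => mv + 1) :=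
  ∑ k : Fin (n + 1) → MonH mv d, ∑ k' : Fin (n + 1) → MonH mv d,
    M k k' • ∏ i : Fin (n + 1), (monHAt i (k i) * monHAt i (k' i))

/-- The largest singular value (ℓ²-operator norm) of a real square matrix. -/
def sigmaMax {ι : Type} [Fintype ι] (M : Matrix ι ι ℝ) : ℝ :=
  sSup {r : ℝ | ∃ y : ι → ℝ, (∑ t, y t ^ 2) ≤ 1 ∧ r = Real.sqrt (∑ t, (M.mulVec y t) ^ 2)}

/-- The supremum norm of `p` on `𝕊 = 𝕊^m × ⋯ × 𝕊^m`. -/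
def InfNormH {n mv : ℕ} (p : PSpace (fun _ : Fin (n + 1) => mv + 1)) : ℝ :=
  sSup {r : ℝ | ∃ a : Fin (n + 1) → Fin (mv + 1) → ℝ,
    (∀ i, ∑ j, a i j ^ 2 = 1) ∧
    r = |MvPolynomial.eval (fun v : Σ _ : Fin (n + 1), Fin (mv + 1) => a v.1 v.2) p|}

/-- `p` is homogeneous of degree `d` in each block of variables separately. -/
def MultiHomog {n : ℕ} (m : Fin (n + 1) → ℕ) (d : ℕ) (p : PSpace m) : Prop :=
  ∀ s ∈ p.support, ∀ i : Fin (n + 1), (∑ j : Fin (m i), s ⟨i, j⟩) = d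

/-- `M` is a separable matrix: a sum of elementary tensors of psd matrices. -/
def SepGram {n : ℕ} {mv d : ℕ}
    (M : Matrix (Fin (n + 1) → MonH mv d) (Fin (n + 1) → MonH mv d) ℝ) : Prop :=
  ∃ (N : ℕ) (Ms : Fin N → ∀ _ : Fin (n + 1), Matrix (MonH mv d) (MonH mv d) ℝ),
    (∀ j i, (Ms j i).PosSemidef) ∧
    ∀ k k', M k k' = ∑ j : Fin N, ∏ i : Fin (n + 1), Ms j i (k i) (k' i)

/-- `μ(p)`: the smallest `λ > 0` such that `p = λ·𝒢(M)` for some `G`-invariant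
subnormalized separable matrix `M`. -/
def muP {n : ℕ} {Ω : Finset (Fin (n + 1)) → ℕ} {G : Type} [Group G] (mv d : ℕ) (A : GAct Ω G)
    (p : PSpace (fun _ : Fin (n + 1) => mv + 1)) : ℝ :=
  sInf {l : ℝ | 0 < l ∧
    ∃ M : Matrix (Fin (n + 1) → MonH mv d) (Fin (n + 1) → MonH mv d) ℝ,
      SepGram M ∧ (∑ k, M k k) ≤ 1 ∧
      (∀ (g : G) (k k' : Fin (n + 1) → MonH mv d),
        M (fun i => k (A.act g i)) (fun i => k' (A.act g i)) = M k k') ∧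
      p = l • gramH M}

/-! ### Factorizability -/

/-- `(Ω,G)` is factorizable. -/
def Factorizable (A : GAct Ω G) : Prop :=
  ∀ N : ℕ, ∃ Cf : ∀ i : Fin (n + 1), (MFi Ω i → Fin N) → ℝ,
    (∀ i β, 0 < Cf i β) ∧
    (∀ (g : G) (i : Fin (n + 1)) (β : MFi Ω i → Fin N),
      Cf (A.act g i) (A.shift g i β) = Cf i β) ∧
    ∀ α : MultiFacet Ω → Fin N,
      (∏ i : Fin (n + 1), Cf i (restr α i)) =
        ((Fintype.card {γ : MultiFacet Ω → Fin N //
          ∃ gs : Fin (n + 1) → G, ∀ i : Fin (n + 1), A.act (gs i) i = i ∧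
            ∀ F : MFi Ω i, γ (A.actF (gs i)⁻¹ F.1) = α F.1} : ℕ) : ℝ)⁻¹

/-! ### Two-block (single edge `Λ₁`) ranks -/

/-- The single-edge rank of a two-block polynomial. -/
def rank1 {mv : ℕ} (p : MvPolynomial (Fin mv ⊕ Fin mv) ℝ) : ℕ∞ :=
  ⨅ r : {r : ℕ // ∃ f g : Fin r → MvPolynomial (Fin mv) ℝ,
    p = ∑ α : Fin r, rename Sum.inl (f α) * rename Sum.inr (g α)}, (r.1 : ℕ∞)

/-- The single-edge separable rank (w.r.t. the local sos cones). -/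
def sep1 {mv : ℕ} (p : MvPolynomial (Fin mv ⊕ Fin mv) ℝ) : ℕ∞ :=
  ⨅ r : {r : ℕ // ∃ f g : Fin r → MvPolynomial (Fin mv) ℝ,
    (∀ α, IsSos (f α) ∧ IsSos (g α)) ∧
    p = ∑ α : Fin r, rename Sum.inl (f α) * rename Sum.inr (g α)}, (r.1 : ℕ∞)

/-- The single-edge sos rank. -/
def sos1 {mv : ℕ} (p : MvPolynomial (Fin mv ⊕ Fin mv) ℝ) : ℕ∞ :=
  ⨅ r : {r : ℕ // ∃ (s₀ s₁ : ℕ) (a : Fin s₀ → Fin r → MvPolynomial (Fin mv) ℝ)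
    (b : Fin s₁ → Fin r → MvPolynomial (Fin mv) ℝ),
    p = ∑ k : Fin s₀, ∑ l : Fin s₁,
      (∑ α : Fin r, rename Sum.inl (a k α) * rename Sum.inr (b l α)) ^ 2}, (r.1 : ℕ∞)

/-- The Euclidean-distance-matrix polynomial `p_m = ∑ (i-j)² xᵢ² yⱼ²`. -/
def pm (mv : ℕ) : MvPolynomial (Fin mv ⊕ Fin mv) ℝ :=
  ∑ i : Fin mv, ∑ j : Fin mv,
    MvPolynomial.C (((i : ℕ) : ℝ) - ((j : ℕ) : ℝ)) ^ 2 *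
      (X (Sum.inl i) ^ 2 * X (Sum.inr j) ^ 2)


/-- Constant block sizes are trivially compatible with any group action. -/
theorem constCompat {n : ℕ} {Ω : Finset (Fin (n + 1)) → ℕ} {G : Type} [Group G]
    (A : GAct Ω G) (mv : ℕ) :
    ∀ (g : G) (i : Fin (n + 1)),
      (fun _ : Fin (n + 1) => mv) (A.act g i) = (fun _ : Fin (n + 1) => mv) i :=
  fun _ _ => rfl

/-! ### Auxiliary lemmas for statement2 -/

section Statement2Aux

variable {n : ℕ} {Ω : Finset (Fin (n + 1)) → ℕ}

lemma exists_facet_superset (hΩ : IsWSC Ω) {S : Finset (Fin (n + 1))} (hS : Ω S ≠ 0) :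
    ∃ F, IsFacet Ω F ∧ S ⊆ F := by
  classical
  set 𝒯 : Finset (Finset (Fin (n + 1))) :=
    Finset.univ.filter (fun T => Ω T ≠ 0 ∧ S ⊆ T) with h𝒯
  have hSmem : S ∈ 𝒯 := by simp [h𝒯, hS]
  obtain ⟨F, hF, hmax⟩ := 𝒯.exists_max_image (fun T => T.card) ⟨S, hSmem⟩
  simp only [h𝒯, Finset.mem_filter, Finset.mem_univ, true_and] at hF hmax
  refine ⟨F, ⟨hF.1, ?_⟩, hF.2⟩
  intro T hT hFT
  exact (Finset.eq_of_subset_of_card_le hFT (hmax T ⟨hT, hF.2.trans hFT⟩)).symm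

lemma exists_facet_mem (hΩ : IsWSC Ω) (i : Fin (n + 1)) :
    ∃ F, IsFacet Ω F ∧ i ∈ F := by
  obtain ⟨F, hF, hSF⟩ := exists_facet_superset hΩ (hΩ.2 i)
  exact ⟨F, hF, hSF (Finset.mem_singleton_self i)⟩

lemma facet_nonempty (hΩ : IsWSC Ω) {F : Finset (Fin (n + 1))} (hF : IsFacet Ω F) :
    F.Nonempty := by
  by_contra h
  have hFe : F = ∅ := Finset.not_nonempty_iff_eq_empty.1 h
  have := hF.2 {0} (hΩ.2 0) (by rw [hFe]; exact Finset.empty_subset _)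
  rw [hFe] at this
  exact (Finset.singleton_ne_empty (0 : Fin (n + 1))) this

lemma mfi_nonempty (hΩ : IsWSC Ω) (i : Fin (n + 1)) : Nonempty (MFi Ω i) := by
  obtain ⟨F, hF, hiF⟩ := exists_facet_mem hΩ i
  exact ⟨⟨⟨⟨F, hF⟩, ⟨0, Nat.pos_of_ne_zero hF.1⟩⟩, hiF⟩⟩

lemma const_of_locally_const (hΩ : IsWSC Ω) (hconn : Conn Ω) {X : Type*}
    (f : MultiFacet Ω → X) (c : Fin (n + 1) → X)
    (hc : ∀ (i : Fin (n + 1)) (F : MFi Ω i), f F.1 = c i) :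
    ∀ F F' : MultiFacet Ω, f F = f F' := by
  have hcc : ∀ i j : Fin (n + 1), c i = c j := by
    intro i j
    induction hconn i j with
    | refl => rfl
    | tail _ hbc ih =>
      obtain ⟨F, hF, haF, hbF⟩ := hbc
      have hm0 : (0 : ℕ) < Ω F := Nat.pos_of_ne_zero hF.1
      exact ih.trans ((hc _ (⟨⟨⟨F, hF⟩, ⟨0, hm0⟩⟩, haF⟩ : MFi Ω _)).symm.trans
        (hc _ ⟨⟨⟨F, hF⟩, ⟨0, hm0⟩⟩, hbF⟩))
  intro F F'
  obtain ⟨i, hi⟩ := facet_nonempty hΩ F.1.2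
  obtain ⟨j, hj⟩ := facet_nonempty hΩ F'.1.2
  calc f F = c i := hc i ⟨F, hi⟩
    _ = c j := hcc i j
    _ = f F' := (hc j ⟨F', hj⟩).symm

set_option maxHeartbeats 1000000 in
lemma tdec_to_odec (hΩ : IsWSC Ω) (hconn : Conn Ω) {m : Fin (n + 1) → ℕ} {p : PSpace m}
    {r : ℕ} (h : HasTDec m p r) : HasODec Ω m p r := by
  classical
  obtain ⟨q, hq⟩ := h
  refine ⟨fun i β => if h : ∃ c, ∀ F, β F = c then q h.choose i else 0, ?_⟩
  have hzero : ∀ α : MultiFacet Ω → Fin r, (¬ ∃ c, ∀ F, α F = c) →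
      (∏ i : Fin (n + 1), emb m i
        (if h : ∃ c, ∀ F : MFi Ω i, restr α i F = c then q h.choose i else 0)) = 0 := by
    intro α hα
    by_contra hne
    apply hα
    have hloc : ∀ i : Fin (n + 1), ∃ c, ∀ F : MFi Ω i, restr α i F = c := by
      intro i
      by_contra hbad
      apply hne
      refine Finset.prod_eq_zero (Finset.mem_univ i) ?_
      rw [dif_neg hbad, map_zero]
    choose c hc using hloc
    have hconst := const_of_locally_const hΩ hconn α c (fun i F => hc i F)
    obtain ⟨F₀⟩ := mfi_nonempty hΩ 0
    exact ⟨α F₀.1, fun F => hconst F F₀.1⟩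
  calc p = ∑ j : Fin r, ∏ i : Fin (n + 1), emb m i (q j i) := hq
    _ = ∑ α ∈ Finset.univ.image (fun c : Fin r => Function.const (MultiFacet Ω) c),
        ∏ i : Fin (n + 1), emb m i
          (if h : ∃ c, ∀ F : MFi Ω i, restr α i F = c then q h.choose i else 0) := by
        rw [Finset.sum_image]
        · apply Finset.sum_congr rfl
          intro c _
          apply Finset.prod_congr rfl
          intro i _
          have hex : ∃ c', ∀ F : MFi Ω i, restr (Function.const (MultiFacet Ω) c) i F = c' :=
            ⟨c, fun F => rfl⟩
          rw [dif_pos hex]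
          obtain ⟨F₀⟩ := mfi_nonempty hΩ i
          rw [← hex.choose_spec F₀]
          rfl
        · intro a _ b _ hab
          obtain ⟨F₀⟩ := mfi_nonempty hΩ 0
          exact congrFun hab F₀.1
    _ = ∑ α : MultiFacet Ω → Fin r, ∏ i : Fin (n + 1), emb m i
          (if h : ∃ c, ∀ F : MFi Ω i, restr α i F = c then q h.choose i else 0) := by
        refine Finset.sum_subset (Finset.subset_univ _) (fun α _ hα => hzero α ?_)
        rintro ⟨c, hcc⟩
        exact hα (Finset.mem_image.2 ⟨c, Finset.mem_univ c, (funext fun F => (hcc F)).symm⟩)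


section OrbitSection

variable {G : Type} [Group G]

def orbSetoid (A : GAct Ω G) : Setoid (MultiFacet Ω) :=
  ⟨fun F F' => ∃ g : G, A.actF g F = F',
   ⟨fun F => ⟨1, by simp⟩,
    fun {F F'} h => by
      obtain ⟨g, hg⟩ := h
      exact ⟨g⁻¹, by rw [← hg, map_inv]; exact Equiv.symm_apply_apply _ _⟩,
    fun {F F' F''} h h' => by
      obtain ⟨g, hg⟩ := h; obtain ⟨g', hg'⟩ := h'
      exact ⟨g' * g, by rw [map_mul, Equiv.Perm.mul_apply, hg, hg']⟩⟩⟩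

noncomputable def repQ (A : GAct Ω G) (F : MultiFacet Ω) : MultiFacet Ω :=
  (Quotient.mk (orbSetoid A) F).out

lemma repQ_spec (A : GAct Ω G) (F : MultiFacet Ω) : ∃ g : G, A.actF g (repQ A F) = F :=
  Quotient.exact ((Quotient.mk (orbSetoid A) F).out_eq)

lemma repQ_act (A : GAct Ω G) (g : G) (F : MultiFacet Ω) :
    repQ A (A.actF g F) = repQ A F := by
  unfold repQ
  congr 1
  exact Quotient.sound ⟨g⁻¹, by rw [map_inv]; exact Equiv.symm_apply_apply _ _⟩

noncomputable def tfun (A : GAct Ω G) (F : MultiFacet Ω) : G := (repQ_spec A F).choose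

lemma tfun_spec (A : GAct Ω G) (F : MultiFacet Ω) : A.actF (tfun A F) (repQ A F) = F :=
  (repQ_spec A F).choose_spec

lemma free_cancel {A : GAct Ω G} (hfree : A.Free) {g g' : G} {F : MultiFacet Ω}
    (h : A.actF g F = A.actF g' F) : g = g' := by
  have h1 : A.actF (g'⁻¹ * g) F = F := by
    rw [map_mul, Equiv.Perm.mul_apply, h, map_inv]
    exact Equiv.symm_apply_apply _ _
  have := hfree _ _ h1
  rwa [inv_mul_eq_one, eq_comm] at this

lemma tfun_act {A : GAct Ω G} (hfree : A.Free) (g : G) (F : MultiFacet Ω) :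
    tfun A (A.actF g F) = g * tfun A F := by
  apply free_cancel hfree (F := repQ A F)
  rw [map_mul, Equiv.Perm.mul_apply, tfun_spec]
  have := tfun_spec A (A.actF g F)
  rwa [repQ_act] at this

lemma act_inv_cancel (A : GAct Ω G) (g : G) (i : Fin (n + 1)) :
    A.act g (A.act g⁻¹ i) = i := by
  rw [map_inv]; exact Equiv.apply_symm_apply _ _

lemma act_inv_cancel' (A : GAct Ω G) (g : G) (i : Fin (n + 1)) :
    A.act g⁻¹ (A.act g i) = i := by
  rw [map_inv]; exact Equiv.symm_apply_apply _ _

lemma actF_inv_cancel (A : GAct Ω G) (g : G) (F : MultiFacet Ω) :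
    A.actF g⁻¹ (A.actF g F) = F := by
  rw [map_inv]; exact Equiv.symm_apply_apply _ _

lemma mem_act_of_mem (A : GAct Ω G) (g : G) {F : MultiFacet Ω} {j : Fin (n + 1)}
    (hj : j ∈ F.1.1) : A.act g j ∈ (A.actF g F).1.1 := by
  rw [A.collapse]; exact Finset.mem_image_of_mem _ hj

/-! The symmetrized decomposition data. -/

variable (A : GAct Ω G) (hΩ : IsWSC Ω)

noncomputable def F0 (hΩ : IsWSC Ω) (i : Fin (n + 1)) : MFi Ω i :=
  (mfi_nonempty hΩ i).some

noncomputable def wfun {N r : ℕ} (d : Fin N → G × Fin r) (i : Fin (n + 1))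
    (β : MFi Ω i → Fin N) : G :=
  tfun A (F0 hΩ i).1 * (d (β (F0 hΩ i))).1

def GoodB {N r : ℕ} (d : Fin N → G × Fin r) (i : Fin (n + 1))
    (β : MFi Ω i → Fin N) : Prop :=
  ∀ F : MFi Ω i, (d (β F)).1 = (tfun A F.1)⁻¹ * wfun A hΩ d i β

lemma good_of_exists {N r : ℕ} {d : Fin N → G × Fin r} {i : Fin (n + 1)}
    {β : MFi Ω i → Fin N} {h : G} (hh : ∀ F : MFi Ω i, (d (β F)).1 = (tfun A F.1)⁻¹ * h) :
    GoodB A hΩ d i β := by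
  have hw : wfun A hΩ d i β = h := by
    unfold wfun
    rw [hh (F0 hΩ i), mul_inv_cancel_left]
  intro F
  rw [hw]; exact hh F

lemma good_w_eq {N r : ℕ} {d : Fin N → G × Fin r} {i : Fin (n + 1)}
    {β : MFi Ω i → Fin N} {h : G} (hh : ∀ F : MFi Ω i, (d (β F)).1 = (tfun A F.1)⁻¹ * h) :
    wfun A hΩ d i β = h := by
  unfold wfun
  rw [hh (F0 hΩ i), mul_inv_cancel_left]

lemma mem_gamma {N r : ℕ} (d : Fin N → G × Fin r) (i : Fin (n + 1))
    (β : MFi Ω i → Fin N) (F : MFi Ω (A.act (wfun A hΩ d i β)⁻¹ i)) :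
    i ∈ (A.actF (wfun A hΩ d i β) F.1).1.1 := by
  have := mem_act_of_mem A (wfun A hΩ d i β) F.2
  rwa [act_inv_cancel] at this

noncomputable def gammafun {N r : ℕ} (d : Fin N → G × Fin r) (i : Fin (n + 1))
    (β : MFi Ω i → Fin N) : MFi Ω (A.act (wfun A hΩ d i β)⁻¹ i) → Fin r :=
  fun F => (d (β ⟨A.actF (wfun A hΩ d i β) F.1, mem_gamma A hΩ d i β F⟩)).2

variable {m : Fin (n + 1) → ℕ}

noncomputable def qsym (hm : ∀ (g : G) (i : Fin (n + 1)), m (A.act g i) = m i)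
    {N r : ℕ} (d : Fin N → G × Fin r) (qh : ∀ i : Fin (n + 1), (MFi Ω i → Fin r) → LSpace m i)
    (i : Fin (n + 1)) (β : MFi Ω i → Fin N) : LSpace m i :=
  if GoodB A hΩ d i β then
    rename (Fin.cast (hm (wfun A hΩ d i β)⁻¹ i))
      (qh (A.act (wfun A hΩ d i β)⁻¹ i) (gammafun A hΩ d i β))
  else 0

/-- Transport lemma: renamed local polynomials at propositionally equal sites agree. -/
lemma rename_cast_congr {r : ℕ} (qh : ∀ i : Fin (n + 1), (MFi Ω i → Fin r) → LSpace m i)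
    {j j' : Fin (n + 1)} (hjj : j = j') (γ : MFi Ω j → Fin r) (γ' : MFi Ω j' → Fin r)
    (hγ : ∀ (F : MultiFacet Ω) (h1 : j ∈ F.1.1) (h2 : j' ∈ F.1.1), γ ⟨F, h1⟩ = γ' ⟨F, h2⟩)
    {b : ℕ} (e1 : m j = b) (e2 : m j' = b) :
    rename (Fin.cast e1) (qh j γ) = rename (Fin.cast e2) (qh j' γ') := by
  subst hjj
  have : γ = γ' := funext fun F => hγ F.1 F.2 F.2
  rw [this]

lemma emb_cast_congr {j j' : Fin (n + 1)} (hjj : j = j') {a : ℕ} (ej : a = m j)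
    (ej' : a = m j') (u : MvPolynomial (Fin a) ℝ) :
    emb m j (rename (Fin.cast ej) u) = emb m j' (rename (Fin.cast ej') u) := by
  subst hjj; rfl


lemma shift_spec (hfree : A.Free) (g : G) (i : Fin (n + 1)) {N r : ℕ}
    (d : Fin N → G × Fin r) (β : MFi Ω i → Fin N) (hgood : GoodB A hΩ d i β) :
    ∀ F : MFi Ω (A.act g i),
      (d (A.shift g i β F)).1 = (tfun A F.1)⁻¹ * (g * wfun A hΩ d i β) := by
  intro F
  have hF := hgood ⟨A.actF g⁻¹ F.1, A.mem_shift g i F⟩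
  show (d (β ⟨A.actF g⁻¹ F.1, A.mem_shift g i F⟩)).1 = _
  rw [hF, tfun_act hfree]
  group

lemma goodB_shift (hfree : A.Free) (g : G) (i : Fin (n + 1)) {N r : ℕ}
    (d : Fin N → G × Fin r) (β : MFi Ω i → Fin N) (hgood : GoodB A hΩ d i β) :
    GoodB A hΩ d (A.act g i) (A.shift g i β) :=
  good_of_exists A hΩ (shift_spec A hΩ hfree g i d β hgood)

lemma wfun_shift (hfree : A.Free) (g : G) (i : Fin (n + 1)) {N r : ℕ}
    (d : Fin N → G × Fin r) (β : MFi Ω i → Fin N) (hgood : GoodB A hΩ d i β) :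
    wfun A hΩ d (A.act g i) (A.shift g i β) = g * wfun A hΩ d i β :=
  good_w_eq A hΩ (shift_spec A hΩ hfree g i d β hgood)

lemma goodB_unshift (hfree : A.Free) (g : G) (i : Fin (n + 1)) {N r : ℕ}
    (d : Fin N → G × Fin r) (β : MFi Ω i → Fin N)
    (hgood : GoodB A hΩ d (A.act g i) (A.shift g i β)) : GoodB A hΩ d i β := by
  apply good_of_exists A hΩ (h := g⁻¹ * wfun A hΩ d (A.act g i) (A.shift g i β))
  intro F
  have hmem : A.act g i ∈ (A.actF g F.1).1.1 := mem_act_of_mem A g F.2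
  have hF := hgood ⟨A.actF g F.1, hmem⟩
  have harg : (⟨A.actF g⁻¹ (A.actF g F.1),
      A.mem_shift g i ⟨A.actF g F.1, hmem⟩⟩ : MFi Ω i) = F :=
    Subtype.ext (actF_inv_cancel A g F.1)
  have hsh : A.shift g i β ⟨A.actF g F.1, hmem⟩ = β F := congrArg β harg
  rw [hsh] at hF
  rw [hF, tfun_act hfree]
  group

lemma qsym_equivariant (hfree : A.Free)
    (hm : ∀ (g : G) (i : Fin (n + 1)), m (A.act g i) = m i) {N r : ℕ}
    (d : Fin N → G × Fin r) (qh : ∀ i : Fin (n + 1), (MFi Ω i → Fin r) → LSpace m i)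
    (g : G) (i : Fin (n + 1)) (β : MFi Ω i → Fin N) :
    rename (Fin.cast (hm g i)) (qsym A hΩ hm d qh (A.act g i) (A.shift g i β)) =
      qsym A hΩ hm d qh i β := by
  by_cases hgood : GoodB A hΩ d i β
  · have hgood' := goodB_shift A hΩ hfree g i d β hgood
    have hw := wfun_shift A hΩ hfree g i d β hgood
    unfold qsym
    rw [if_pos hgood, if_pos hgood', rename_rename]
    have hcomp : (Fin.cast (hm g i)) ∘
        (Fin.cast (hm (wfun A hΩ d (A.act g i) (A.shift g i β))⁻¹ (A.act g i))) =
        Fin.cast ((hm (wfun A hΩ d (A.act g i) (A.shift g i β))⁻¹ (A.act g i)).trans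
          (hm g i)) := rfl
    rw [hcomp]
    refine rename_cast_congr qh ?_ _ _ ?_ _ _
    · rw [hw, mul_inv_rev, map_mul, Equiv.Perm.mul_apply, act_inv_cancel']
    · intro F h1 h2
      simp only [gammafun, GAct.shift]
      refine congrArg (fun x => (d (β x)).2) (Subtype.ext ?_)
      show A.actF g⁻¹ (A.actF (wfun A hΩ d (A.act g i) (A.shift g i β)) F) =
        A.actF (wfun A hΩ d i β) F
      rw [hw, map_mul, Equiv.Perm.mul_apply, actF_inv_cancel]
  · have hgood' : ¬ GoodB A hΩ d (A.act g i) (A.shift g i β) :=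
      fun h => hgood (goodB_unshift A hΩ hfree g i d β h)
    unfold qsym
    rw [if_neg hgood, if_neg hgood', map_zero]

lemma rename_perm_prod (hm : ∀ (g : G) (i : Fin (n + 1)), m (A.act g i) = m i) (g : G)
    (s : ∀ i : Fin (n + 1), LSpace m i) :
    rename (permVar A hm g) (∏ i : Fin (n + 1), emb m i (s i)) =
    ∏ i : Fin (n + 1), emb m i (rename (Fin.cast (hm g⁻¹ i)) (s (A.act g⁻¹ i))) := by
  rw [map_prod]
  have step : ∀ (j : Fin (n + 1)) (u : LSpace m j),
      rename (permVar A hm g) (emb m j u) =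
      emb m (A.act g j) (rename (Fin.cast (hm g j).symm) u) := by
    intro j u
    show rename (permVar A hm g) (rename (fun k => (⟨j, k⟩ : Σ i, Fin (m i))) u) = rename
      (fun k => (⟨A.act g j, k⟩ : Σ i, Fin (m i))) (rename (Fin.cast (hm g j).symm) u)
    rw [rename_rename, rename_rename]
    rfl
  refine (Equiv.prod_comp (A.act g⁻¹ : Equiv.Perm (Fin (n + 1)))
    (fun i => rename (permVar A hm g) (emb m i (s i)))).symm.trans
    (Finset.prod_congr rfl fun i _ => ?_)
  rw [step (A.act g⁻¹ i) (s (A.act g⁻¹ i))]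
  exact emb_cast_congr (act_inv_cancel A g i) _ _ _



noncomputable def qhat {m : Fin (n + 1) → ℕ} {r : ℕ} (c : ℝ)
    (q0 : ∀ i : Fin (n + 1), (MFi Ω i → Fin r) → LSpace m i) :
    ∀ i : Fin (n + 1), (MFi Ω i → Fin r) → LSpace m i :=
  fun i β => if i = 0 then c • q0 i β else q0 i β

lemma qhat_zero {m : Fin (n + 1) → ℕ} {r : ℕ} (c : ℝ)
    (q0 : ∀ i : Fin (n + 1), (MFi Ω i → Fin r) → LSpace m i) (β) :
    qhat c q0 0 β = c • q0 0 β := if_pos rfl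

lemma qhat_ne {m : Fin (n + 1) → ℕ} {r : ℕ} (c : ℝ)
    (q0 : ∀ i : Fin (n + 1), (MFi Ω i → Fin r) → LSpace m i) {i : Fin (n + 1)}
    (hi : i ≠ 0) (β) : qhat c q0 i β = q0 i β := if_neg hi

def Phi (A : GAct Ω G) {N r : ℕ} (en : G × Fin r → Fin N) :
    G × (MultiFacet Ω → Fin r) → (MultiFacet Ω → Fin N) :=
  fun x F => en ((tfun A F)⁻¹ * x.1, x.2 F)

lemma qhat_sum {m : Fin (n + 1) → ℕ} {r : ℕ} {p : PSpace m} (c : ℝ)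
    (q0 : ∀ i : Fin (n + 1), (MFi Ω i → Fin r) → LSpace m i)
    (hq0 : p = ∑ α : MultiFacet Ω → Fin r, ∏ i : Fin (n + 1), emb m i (q0 i (restr α i))) :
    ∑ α : MultiFacet Ω → Fin r, ∏ i : Fin (n + 1), emb m i (qhat c q0 i (restr α i)) =
      c • p := by
  rw [hq0, Finset.smul_sum]
  refine Finset.sum_congr rfl fun α _ => ?_
  rw [← Finset.mul_prod_erase Finset.univ
      (fun i => emb m i (qhat c q0 i (restr α i))) (Finset.mem_univ 0),
    ← Finset.mul_prod_erase Finset.univ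
      (fun i => emb m i (q0 i (restr α i))) (Finset.mem_univ 0)]
  have h0 : emb m 0 (qhat c q0 0 (restr α 0)) = c • emb m 0 (q0 0 (restr α 0)) := by
    rw [qhat_zero, map_smul]
  rw [h0, smul_mul_assoc]
  have herase : ∏ i ∈ Finset.univ.erase 0, emb m i (qhat c q0 i (restr α i)) =
      ∏ i ∈ Finset.univ.erase 0, emb m i (q0 i (restr α i)) :=
    Finset.prod_congr rfl fun i hi => by rw [qhat_ne c q0 (Finset.mem_erase.1 hi).1]
  rw [herase]

set_option maxHeartbeats 2000000 in
lemma odec_to_ogdec (hΩ : IsWSC Ω) (hconn : Conn Ω) [Fintype G]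
    (A : GAct Ω G) (hfree : A.Free) {m : Fin (n + 1) → ℕ}
    (hm : ∀ (g : G) (i : Fin (n + 1)), m (A.act g i) = m i) {p : PSpace m}
    (hinv : GInvPoly A hm p) {r : ℕ} (h : HasODec Ω m p r) :
    HasOGDec A hm p (Fintype.card G * r) := by
  classical
  obtain ⟨q0, hq0⟩ := h
  have hcG0 : (Fintype.card G : ℝ) ≠ 0 := Nat.cast_ne_zero.2 Fintype.card_ne_zero
  set qh := qhat ((Fintype.card G : ℝ))⁻¹ q0 with hqh
  have hqhsum := qhat_sum ((Fintype.card G : ℝ))⁻¹ q0 hq0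
  have hcard : Fintype.card (G × Fin r) = Fintype.card G * r := by simp
  set e : (G × Fin r) ≃ Fin (Fintype.card G * r) := Fintype.equivFinOfCardEq hcard with he
  set d : Fin (Fintype.card G * r) → G × Fin r := fun x => e.symm x with hd
  set Φ := Phi A (N := Fintype.card G * r) (r := r) e with hΦdef
  have hΦd : ∀ (x : G × (MultiFacet Ω → Fin r)) (F : MultiFacet Ω),
      d (Φ x F) = ((tfun A F)⁻¹ * x.1, x.2 F) := by
    intro x F
    show e.symm (e _) = _
    rw [e.symm_apply_apply]
  refine ⟨qsym A hΩ hm d qh, ?_, fun g i β => qsym_equivariant A hΩ hfree hm d qh g i β⟩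
  have hzero : ∀ α' : MultiFacet Ω → Fin (Fintype.card G * r),
      (∃ i, ¬ GoodB A hΩ d i (restr α' i)) →
      ∏ i : Fin (n + 1), emb m i (qsym A hΩ hm d qh i (restr α' i)) = 0 := by
    rintro α' ⟨i, hbad⟩
    refine Finset.prod_eq_zero (Finset.mem_univ i) ?_
    unfold qsym
    rw [if_neg hbad, map_zero]
  have hgoodΦ : ∀ (h : G) (α : MultiFacet Ω → Fin r) (i : Fin (n + 1)),
      ∀ F : MFi Ω i, (d ((restr (Φ (h, α)) i) F)).1 = (tfun A F.1)⁻¹ * h := by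
    intro h α i F
    rw [show (restr (Φ (h, α)) i) F = Φ (h, α) F.1 from rfl, hΦd]
  have hwΦ : ∀ (h : G) (α : MultiFacet Ω → Fin r) (i : Fin (n + 1)),
      wfun A hΩ d i (restr (Φ (h, α)) i) = h :=
    fun h α i => good_w_eq A hΩ (hgoodΦ h α i)
  have hsite : ∀ (h : G) (α : MultiFacet Ω → Fin r) (i : Fin (n + 1)),
      qsym A hΩ hm d qh i (restr (Φ (h, α)) i) =
      rename (Fin.cast (hm h⁻¹ i))
        (qh (A.act h⁻¹ i) (restr (fun F => α (A.actF h F)) (A.act h⁻¹ i))) := by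
    intro h α i
    have hg : GoodB A hΩ d i (restr (Φ (h, α)) i) := good_of_exists A hΩ (hgoodΦ h α i)
    have hw := hwΦ h α i
    unfold qsym
    rw [if_pos hg]
    refine rename_cast_congr qh ?_ _ _ ?_ _ _
    · rw [hw]
    · intro F h1 h2
      simp only [gammafun]
      have hval : ∀ X : MultiFacet Ω, (d (Φ (h, α) X)).2 = α X := by
        intro X; rw [hΦd]
      refine ((hval (A.actF (wfun A hΩ d i (restr (Φ (h, α)) i)) F)).trans ?_)
      rw [hw]
      rfl
  have hΦinj : Function.Injective Φ := by
    intro a b hab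
    obtain ⟨Fs⟩ := mfi_nonempty hΩ 0
    have h2 := e.injective (congrFun hab Fs.1)
    have ha1 : a.1 = b.1 := mul_left_cancel (congrArg Prod.fst h2)
    have ha2 : a.2 = b.2 := funext fun F => congrArg Prod.snd (e.injective (congrFun hab F))
    exact Prod.ext ha1 ha2
  have himage : ∀ α' : MultiFacet Ω → Fin (Fintype.card G * r),
      α' ∉ Finset.univ.image Φ → ∃ i, ¬ GoodB A hΩ d i (restr α' i) := by
    intro α' hni
    by_contra hng
    push_neg at hng
    apply hni
    have hloc : ∀ (i : Fin (n + 1)) (F : MFi Ω i),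
        tfun A F.1 * (d (α' F.1)).1 = wfun A hΩ d i (restr α' i) := by
      intro i F
      rw [show (d (α' F.1)).1 = (tfun A F.1)⁻¹ * wfun A hΩ d i (restr α' i) from hng i F,
        mul_inv_cancel_left]
    have hcst := const_of_locally_const hΩ hconn
      (fun F : MultiFacet Ω => tfun A F * (d (α' F)).1)
      (fun i => wfun A hΩ d i (restr α' i)) hloc
    have ⟨Fs⟩ := mfi_nonempty hΩ 0
    refine Finset.mem_image.2 ⟨(tfun A Fs.1 * (d (α' Fs.1)).1, fun F => (d (α' F)).2),
      Finset.mem_univ _, ?_⟩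
    funext F
    show e ((tfun A F)⁻¹ * (tfun A Fs.1 * (d (α' Fs.1)).1), (d (α' F)).2) = α' F
    have hF : tfun A F * (d (α' F)).1 = tfun A Fs.1 * (d (α' Fs.1)).1 := hcst F Fs.1
    rw [← hF, inv_mul_cancel_left]
    calc e ((d (α' F)).1, (d (α' F)).2) = e (d (α' F)) := by rw [Prod.mk.eta]
      _ = α' F := e.apply_symm_apply _
  have hbij : ∀ h : G, Function.Bijective
      (fun α : MultiFacet Ω → Fin r => fun F => α (A.actF h F)) := by
    intro h
    constructor
    · intro a b hab
      funext F
      have h5 : A.actF h (A.actF h⁻¹ F) = F := by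
        rw [map_inv]; exact Equiv.apply_symm_apply _ _
      calc a F = a (A.actF h (A.actF h⁻¹ F)) := by rw [h5]
        _ = b (A.actF h (A.actF h⁻¹ F)) := congrFun hab (A.actF h⁻¹ F)
        _ = b F := by rw [h5]
    · intro α
      refine ⟨fun F => α (A.actF h⁻¹ F), funext fun F => ?_⟩
      show α (A.actF h⁻¹ (A.actF h F)) = α F
      rw [actF_inv_cancel]
  calc p = ∑ _h : G, (Fintype.card G : ℝ)⁻¹ • p := by
        rw [Finset.sum_const, Finset.card_univ, ← Nat.cast_smul_eq_nsmul ℝ, smul_smul,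
          mul_inv_cancel₀ hcG0, one_smul]
    _ = ∑ h : G, ∑ α : MultiFacet Ω → Fin r, ∏ i : Fin (n + 1),
          emb m i (rename (Fin.cast (hm h⁻¹ i))
            (qh (A.act h⁻¹ i) (restr α (A.act h⁻¹ i)))) := by
        refine Finset.sum_congr rfl fun h _ => ?_
        have hren := congrArg (rename (permVar A hm h)) hqhsum
        rw [map_sum, map_smul, hinv h] at hren
        rw [← hren]
        exact Finset.sum_congr rfl fun α _ =>
          rename_perm_prod A hm h (fun i => qh i (restr α i))
    _ = ∑ h : G, ∑ α : MultiFacet Ω → Fin r, ∏ i : Fin (n + 1),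
          emb m i (rename (Fin.cast (hm h⁻¹ i))
            (qh (A.act h⁻¹ i) (restr (fun F => α (A.actF h F)) (A.act h⁻¹ i)))) := by
        refine Finset.sum_congr rfl fun h _ => ?_
        exact (Fintype.sum_bijective _ (hbij h) _ _ (fun α => rfl)).symm
    _ = ∑ h : G, ∑ α : MultiFacet Ω → Fin r, ∏ i : Fin (n + 1),
          emb m i (qsym A hΩ hm d qh i (restr (Φ (h, α)) i)) := by
        refine Finset.sum_congr rfl fun h _ => Finset.sum_congr rfl fun α _ =>
          Finset.prod_congr rfl fun i _ => ?_
        rw [hsite h α i]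
    _ = ∑ x : G × (MultiFacet Ω → Fin r), ∏ i : Fin (n + 1),
          emb m i (qsym A hΩ hm d qh i (restr (Φ x) i)) := by
        rw [Fintype.sum_prod_type]
    _ = ∑ α' ∈ Finset.univ.image Φ, ∏ i : Fin (n + 1),
          emb m i (qsym A hΩ hm d qh i (restr α' i)) := by
        rw [Finset.sum_image (fun a _ b _ hab => hΦinj hab)]
    _ = ∑ α' : MultiFacet Ω → Fin (Fintype.card G * r), ∏ i : Fin (n + 1),
          emb m i (qsym A hΩ hm d qh i (restr α' i)) :=
        Finset.sum_subset (Finset.subset_univ _)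
          (fun α' _ hα' => hzero α' (himage α' hα'))


end OrbitSection

end Statement2Aux

/-- `rank_{(Ω,G)}(p) ≤ |G|·rank_Ω(p) ≤ |G|·rank_{Σₙ}(p)`. -/
theorem statement2 {n : ℕ} {Ω : Finset (Fin (n + 1)) → ℕ} (hΩ : IsWSC Ω) (hconn : Conn Ω)
    {G : Type} [Group G] [Fintype G] (A : GAct Ω G) (hfree : A.Free)
    {m : Fin (n + 1) → ℕ} (hm : ∀ (g : G) (i : Fin (n + 1)), m (A.act g i) = m i)
    (p : PSpace m) (hinv : GInvPoly A hm p) :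
    OGRank A hm p ≤ (Fintype.card G : ℕ∞) * ORank Ω m p ∧
    (Fintype.card G : ℕ∞) * ORank Ω m p ≤ (Fintype.card G : ℕ∞) * TRank m p := by
  constructor
  · by_cases hne : ∃ r : ℕ, HasODec Ω m p r
    · have key : ∀ r : ℕ, HasODec Ω m p r →
          OGRank A hm p ≤ (Fintype.card G : ℕ∞) * (r : ℕ∞) := by
        intro r hr
        have h1 : OGRank A hm p ≤ ((Fintype.card G * r : ℕ) : ℕ∞) :=
          iInf_le_of_le ⟨_, odec_to_ogdec hΩ hconn A hfree hm hinv hr⟩ le_rfl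
        rwa [Nat.cast_mul] at h1
      have h2 : ((Nat.find hne : ℕ) : ℕ∞) ≤ ORank Ω m p :=
        le_iInf fun x => Nat.cast_le.2 (Nat.find_min' hne x.2)
      exact (key _ (Nat.find_spec hne)).trans (mul_le_mul_right h2 _)
    · haveI hempty : IsEmpty {r : ℕ // HasODec Ω m p r} := ⟨fun x => hne ⟨x.1, x.2⟩⟩
      have htop : ORank Ω m p = ⊤ := by rw [ORank]; exact iInf_of_empty _
      rw [htop, show (Fintype.card G : ℕ∞) * ⊤ = ⊤ from
        WithTop.mul_top (Nat.cast_ne_zero.mpr Fintype.card_ne_zero)]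
      exact le_top
  · refine mul_le_mul_right (le_iInf fun x => ?_) _
    exact iInf_le_of_le ⟨x.1, tdec_to_odec hΩ hconn x.2⟩ le_rfl

end
end PolyDec
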